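/- Suppose p ∈ ℂ[z,w] is square free and inner toral. Then the partial derivative ∂p/∂w has only finitely many zeros in 𝔙(p); that is, the set {(z,w) ∈ 𝔙(p) : (∂p/∂w)(z,w) = 0} is finite. -/

import Mathlib

noncomputable section

open MvPolynomial

/-- Polynomials in two variables `z, w` over `ℂ`. -/
abbrev CPoly2 : Type := MvPolynomial (Fin 2) ℂ

/-- Evaluation of a two-variable polynomial at `(z, w)`. -/
def pevalAt (p : CPoly2) (z w : ℂ) : ℂ := eval ![z, w] p

/-- The zero set `Z(p) ⊆ ℂ²`. -/
def zeroSet (p : CPoly2) : Set (ℂ × ℂ) := {x | pevalAt p x.1 x.2 = 0}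

/-- The open bidisk `𝔻²`. -/
def biDisk : Set (ℂ × ℂ) := {x | ‖x.1‖ < 1 ∧ ‖x.2‖ < 1}

/-- `𝔙(p) = Z(p) ∩ 𝔻²`. -/
def distVar (p : CPoly2) : Set (ℂ × ℂ) := zeroSet p ∩ biDisk

/-- A polynomial is inner toral if its zero set lies in `𝔻² ∪ 𝕋² ∪ 𝔼²`. -/
def InnerToral (p : CPoly2) : Prop :=
  ∀ z w : ℂ, pevalAt p z w = 0 →
    (‖z‖ < 1 ∧ ‖w‖ < 1) ∨
    (‖z‖ = 1 ∧ ‖w‖ = 1) ∨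
    (1 < ‖z‖ ∧ 1 < ‖w‖)

/-- `p` and `q` are relatively prime: no non-constant polynomial divides both. -/
def RelPrime (p q : CPoly2) : Prop :=
  ∀ d : CPoly2, d ∣ p → d ∣ q → d.totalDegree = 0

/-- `p` is square free: the square of a non-constant polynomial never divides `p`. -/
def SqFree (p : CPoly2) : Prop :=
  ∀ d : CPoly2, 0 < d.totalDegree → ¬ d * d ∣ p

/-- `(λ, μ)` is a regular point for `p`: `p(λ,μ) = 0` and `∇p(λ,μ) ≠ 0`. -/
def IsRegularPoint (p : CPoly2) (x : ℂ × ℂ) : Prop :=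
  pevalAt p x.1 x.2 = 0 ∧
    (eval ![x.1, x.2] (pderiv (0 : Fin 2) p) ≠ 0 ∨
     eval ![x.1, x.2] (pderiv (1 : Fin 2) p) ≠ 0)

/-- The one-variable polynomial `p_λ(w) = p(λ, w)`. -/
def pSlice (p : CPoly2) (lam : ℂ) : Polynomial ℂ :=
  MvPolynomial.aeval ![Polynomial.C lam, Polynomial.X] p

section Ops

variable {H : Type*} [NormedAddCommGroup H] [NormedSpace ℂ H]

/-- For `q(z,w) = Σ c_{ij} z^i w^j`, `polyOp q S T = q(S,T) = Σ c_{ij} S^i T^j`. -/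
def polyOp (q : CPoly2) (S T : H →L[ℂ] H) : H →L[ℂ] H :=
  ∑ m ∈ q.support, q.coeff m • (S ^ (m 0) * T ^ (m 1))

/-- A pure isometry: an isometry with `⋂ₙ Vⁿ(H) = {0}`. -/
def IsPureIsometry (S : H →L[ℂ] H) : Prop :=
  (∀ x : H, ‖S x‖ = ‖x‖) ∧ (⋂ n : ℕ, Set.range (⇑(S ^ (n + 1)))) = ({0} : Set H)

/-- A pure `p`-isopair: a commuting pair of pure isometries annihilated by `p`. -/
def IsPureIsopair (p : CPoly2) (S T : H →L[ℂ] H) : Prop :=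
  Commute S T ∧ IsPureIsometry S ∧ IsPureIsometry T ∧ polyOp p S T = 0

/-- The set `{Σ_j q_j(S,T) f_j : q_j ∈ ℂ[z,w]}`. -/
def cyclicSet (S T : H →L[ℂ] H) {k : ℕ} (f : Fin k → H) : Set H :=
  {x | ∃ q : Fin k → CPoly2, x = ∑ j, polyOp (q j) S T (f j)}

/-- `(S,T)` is `k`-cyclic: some `f_1, …, f_k` have `closure {Σ q_j(S,T) f_j} = H`. -/
def IsKCyclic (S T : H →L[ℂ] H) (k : ℕ) : Prop :=
  ∃ f : Fin k → H, closure (cyclicSet S T f) = Set.univ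

/-- `(S,T)` is at most nearly `k`-cyclic: some `f_1, …, f_k` have
`closure {Σ q_j(S,T) f_j}` of finite codimension in `H`. -/
def AtMostNearlyKCyclic (S T : H →L[ℂ] H) (k : ℕ) : Prop :=
  ∃ f : Fin k → H,
    FiniteDimensional ℂ (H ⧸ (Submodule.span ℂ (cyclicSet S T f)).topologicalClosure)

/-- `(S,T)` is nearly `k`-cyclic: at most nearly `k`-cyclic but not `k'` for `k' < k`. -/
def NearlyKCyclic (S T : H →L[ℂ] H) (k : ℕ) : Prop :=
  AtMostNearlyKCyclic S T k ∧ ∀ k' < k, ¬ AtMostNearlyKCyclic S T k'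

/-- Restriction of a continuous linear operator to an invariant subspace. -/
def clmRestrict (S : H →L[ℂ] H) (E : Submodule ℂ H) (h : ∀ x ∈ E, S x ∈ E) : E →L[ℂ] E :=
  { toLinearMap := (S : H →ₗ[ℂ] H).restrict h
    cont := by exact Continuous.subtype_mk (S.continuous.comp continuous_subtype_val) _ }

end Ops

/-- Unitary equivalence of pairs: a unitary `U` with `U S₁ = S₂ U` and `U T₁ = T₂ U`. -/
def UnitarilyEquivPairs {H1 H2 : Type*} [NormedAddCommGroup H1] [NormedSpace ℂ H1]
    [NormedAddCommGroup H2] [NormedSpace ℂ H2]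
    (S1 T1 : H1 →L[ℂ] H1) (S2 T2 : H2 →L[ℂ] H2) : Prop :=
  ∃ U : H1 ≃ₗᵢ[ℂ] H2, (∀ x, U (S1 x) = S2 (U x)) ∧ (∀ x, U (T1 x) = T2 (U x))

section Hilbert

variable {H : Type*} [NormedAddCommGroup H] [InnerProductSpace ℂ H] [CompleteSpace H]

/-- The multiplicity of an isometry: `dim ker V*`. -/
def multiplicity' (S : H →L[ℂ] H) : Cardinal :=
  Module.rank ℂ (LinearMap.ker ((ContinuousLinearMap.adjoint S : H →L[ℂ] H) : H →ₗ[ℂ] H))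

/-- Finite bimultiplicity: both `mult S` and `mult T` are finite. -/
def FiniteBimult (S T : H →L[ℂ] H) : Prop :=
  multiplicity' S < Cardinal.aleph0 ∧ multiplicity' T < Cardinal.aleph0

/-- `dim (ker (S - λ)* ∩ ker (T - μ)*)`. -/
def jointKerDim (S T : H →L[ℂ] H) (lam mu : ℂ) : Cardinal :=
  Module.rank ℂ
    ↥(LinearMap.ker ((ContinuousLinearMap.adjoint (S - lam • 1) : H →L[ℂ] H) : H →ₗ[ℂ] H) ⊓
      LinearMap.ker ((ContinuousLinearMap.adjoint (T - mu • 1) : H →L[ℂ] H) : H →ₗ[ℂ] H))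

/-- `(S,T)` has rank `α`: for each `j` and every regular point `(λ,μ)` of `p` in `𝔙(p_j)`,
`dim (ker (S-λ)* ∩ ker (T-μ)*) = α_j`. -/
def HasRank (p : CPoly2) {s : ℕ} (ps : Fin s → CPoly2) (S T : H →L[ℂ] H)
    (α : Fin s → ℕ) : Prop :=
  ∀ j : Fin s, ∀ x : ℂ × ℂ, x ∈ distVar (ps j) → IsRegularPoint p x →
    jointKerDim S T x.1 x.2 = (α j : Cardinal)

/-- Rank for an isopair attached to a single irreducible polynomial. -/
def HasRankIrred (p : CPoly2) (S T : H →L[ℂ] H) (a : ℕ) : Prop :=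
  ∀ x : ℂ × ℂ, x ∈ distVar p → IsRegularPoint p x →
    jointKerDim S T x.1 x.2 = (a : Cardinal)

end Hilbert

/-- A pair of operators acting on some complex Hilbert space. -/
structure HilbertPair where
  space : Type*
  [nacg : NormedAddCommGroup space]
  [ips : InnerProductSpace ℂ space]
  [cs : CompleteSpace space]
  S : space →L[ℂ] space
  T : space →L[ℂ] space

attribute [instance] HilbertPair.nacg HilbertPair.ips HilbertPair.cs

/-! Viewed in `ℂ[z][w]`, a square-free `p` stays square free over `ℂ(z)` by Gauss's lemma,
hence is separable there; clearing denominators gives `A p + B ∂p/∂w = r(z)` with `r ≠ 0`.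
A common zero of `p` and `∂p/∂w` therefore has `z` among the finitely many roots of `r`.
For `|z| < 1` the slice `p(z, ·)` is not identically zero, as `(z, 2)` would be a zero of `p`
violating inner torality, so it has finitely many roots `w`. -/

open Polynomial Polynomial.Bivariate
open scoped nonZeroDivisors

theorem Squarefree.map_mulEquiv {M N : Type*} [Monoid M] [Monoid N] (e : M ≃* N) {x : M}
    (hx : Squarefree x) : Squarefree (e x) := fun d hd => by
  have : e.symm d * e.symm d ∣ x := by simpa using map_dvd e.symm hd
  simpa using (hx _ this).map e

section FractionField

variable {R K : Type*} [CommRing R] [IsDomain R] [Field K] [Algebra R K] [IsFractionRing R K]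

theorem Squarefree.map_fractionRing [NormalizedGCDMonoid R] {Q : R[X]} (hQ : Squarefree Q) :
    Squarefree (Q.map (algebraMap R K)) := by
  intro d hd
  have hd0 : d ≠ 0 := by
    rintro rfl
    exact (Polynomial.map_ne_zero_iff (IsFractionRing.injective R K)).mpr hQ.ne_zero
      (zero_dvd_iff.mp (by simpa using hd))
  obtain ⟨c, hc, hcd⟩ := IsLocalization.integerNormalization_spec R⁰ d
  set D : R[X] := (IsLocalization.integerNormalization R⁰ d).primPart
  have hD : D.IsPrimitive := isPrimitive_primPart _
  have hDd : D.map (algebraMap R K) ∣ d := by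
    have hc0 : IsUnit (Polynomial.C (algebraMap R K c)) := isUnit_C.mpr <|
      isUnit_iff_ne_zero.mpr (IsFractionRing.to_map_ne_zero_of_mem_nonZeroDivisors hc)
    rw [← hc0.dvd_mul_left, ← Polynomial.smul_eq_C_mul, algebraMap_smul, ← hcd]
    exact Polynomial.map_dvd _ (primPart_dvd _)
  have hDD : D * D ∣ Q := by
    refine (hD.mul hD).dvd_of_fraction_map_dvd_fraction_map (K := K) ?_
    rw [Polynomial.map_mul]
    exact (mul_dvd_mul hDd hDd).trans hd
  exact isUnit_or_eq_zero_of_isUnit_integerNormalization_primPart hd0 (hQ D hDD)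

theorem Polynomial.exists_mul_add_mul_eq_C_of_isCoprime_map {f g : R[X]}
    (h : IsCoprime (f.map (algebraMap R K)) (g.map (algebraMap R K))) :
    ∃ (a b : R[X]) (r : R), r ≠ 0 ∧ a * f + b * g = C r := by
  obtain ⟨a, b, hab⟩ := h
  obtain ⟨c, hc, hca⟩ := IsLocalization.integerNormalization_spec R⁰ a
  obtain ⟨e, he, heb⟩ := IsLocalization.integerNormalization_spec R⁰ b
  refine ⟨C e * IsLocalization.integerNormalization R⁰ a,
    C c * IsLocalization.integerNormalization R⁰ b, c * e,
    mul_ne_zero (nonZeroDivisors.ne_zero hc) (nonZeroDivisors.ne_zero he), ?_⟩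
  apply map_injective (algebraMap R K) (IsFractionRing.injective R K)
  simp only [Polynomial.map_add, Polynomial.map_mul, map_C, hca, heb, Algebra.smul_def,
    Polynomial.algebraMap_apply, map_mul]
  linear_combination (C (algebraMap R K c) * C (algebraMap R K e)) * hab

end FractionField

theorem Squarefree.exists_mul_add_mul_derivative_eq_C {R : Type*} [CommRing R] [IsDomain R]
    [NormalizedGCDMonoid R] [CharZero R] {Q : R[X]} (hQ : Squarefree Q) :
    ∃ (a b : R[X]) (r : R), r ≠ 0 ∧ a * Q + b * derivative Q = Polynomial.C r := by
  have hsep : (Q.map (algebraMap R (FractionRing R))).Separable :=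
    PerfectField.separable_iff_squarefree.mpr hQ.map_fractionRing
  rw [Separable, derivative_map] at hsep
  exact exists_mul_add_mul_eq_C_of_isCoprime_map hsep

namespace Polynomial.Bivariate

theorem finite_setOf_evalEval_eq_zero {k : Type*} [Field k] {Q G a b : k[X][Y]} {r : k[X]}
    (hr : r ≠ 0) (hab : a * Q + b * G = C r) {S : Set k}
    (hS : ∀ z ∈ S, Q.map (evalRingHom z) ≠ 0) :
    {x : k × k | x.1 ∈ S ∧ Q.evalEval x.1 x.2 = 0 ∧ G.evalEval x.1 x.2 = 0}.Finite := by
  have hroots : {z | z ∈ S ∧ r.IsRoot z}.Finite :=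
    (finite_setOfPred_isRoot hr).subset fun _ h => h.2
  refine (hroots.biUnion fun z hz =>
    (finite_setOfPred_isRoot (hS z hz.1)).image fun w => (z, w)).subset ?_
  rintro ⟨z, w⟩ ⟨hz, hQ, hG⟩
  have hrz : r.IsRoot z := by
    simpa [evalEval_add, evalEval_mul, evalEval_C, hQ, hG] using (congrArg (evalEval z w) hab).symm
  exact Set.mem_biUnion (x := z) ⟨hz, hrz⟩
    ⟨w, by simpa [IsRoot, map_evalRingHom_eval] using hQ, rfl⟩

theorem eval_equivMvPolynomial {R : Type*} [CommSemiring R] (z w : R) (P : R[X][Y]) :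
    MvPolynomial.eval ![z, w] (equivMvPolynomial R P) = P.evalEval z w := by
  have : (MvPolynomial.aeval ![z, w]).comp (equivMvPolynomial R).toAlgHom = aevalAeval z w := by
    ext <;> simp
  rw [← coe_aevalAeval_eq_evalEval, ← this]
  rfl

end Polynomial.Bivariate

theorem SqFree.squarefree {p : CPoly2} (hp : SqFree p) : Squarefree p := by
  have hp0 : p ≠ 0 := by
    rintro rfl
    exact hp (MvPolynomial.X 0) (by simp) (dvd_zero _)
  intro d hd
  by_contra hu
  refine hp d (Nat.pos_of_ne_zero fun h => hu ?_) hd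
  rw [MvPolynomial.totalDegree_eq_zero_iff_eq_C] at h
  have hc : d.coeff 0 ≠ 0 := by
    rintro h0
    rw [h0, map_zero] at h
    subst h
    exact hp0 (zero_dvd_iff.mp (by simpa using hd))
  rw [h]
  exact (isUnit_iff_ne_zero.mpr hc).map MvPolynomial.C

theorem InnerToral.map_evalRingHom_ne_zero {p : CPoly2} (hp : InnerToral p) {z : ℂ}
    (hz : ‖z‖ < 1) : ((equivMvPolynomial ℂ).symm p).map (evalRingHom z) ≠ 0 := by
  intro h
  have h2 : pevalAt p z 2 = 0 := by
    rw [pevalAt, ← (equivMvPolynomial ℂ).apply_symm_apply p, eval_equivMvPolynomial,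
      ← map_evalRingHom_eval, h, Polynomial.eval_zero]
  rcases hp z 2 h2 with ⟨-, h⟩ | ⟨h, -⟩ | ⟨h, -⟩ <;> norm_num at h <;> linarith

/-- `∂p/∂w` has only finitely many zeros in `𝔙(p)`. -/
theorem statement5 (p : CPoly2) (hsf : SqFree p) (hit : InnerToral p) :
    {x ∈ distVar p | eval ![x.1, x.2] (pderiv (1 : Fin 2) p) = 0}.Finite := by
  set P := (equivMvPolynomial ℂ).symm p
  have hP : equivMvPolynomial ℂ P = p := (equivMvPolynomial ℂ).apply_symm_apply p
  obtain ⟨a, b, r, hr, hab⟩ := (hsf.squarefree.map_mulEquiv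
    (equivMvPolynomial ℂ).symm.toMulEquiv).exists_mul_add_mul_derivative_eq_C
  refine (finite_setOf_evalEval_eq_zero (S := {z | ‖z‖ < 1}) hr hab
    fun z hz => hit.map_evalRingHom_ne_zero hz).subset ?_
  rintro ⟨z, w⟩ ⟨⟨hpz, hz, -⟩, hdz⟩
  simp only [zeroSet, pevalAt, Set.mem_ofPred_eq, ← hP, pderiv_one_equivMvPolynomial,
    eval_equivMvPolynomial] at hpz hdz
  exact ⟨hz, hpz, hdz⟩
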